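/- arXiv:2110.09645 — 5 statements merged into one kernel-verified Lean document; each statement's English description precedes it below -/
import Mathlib

section
/- Let Σ be a K×K positive definite matrix and for each nonzero binary vector m ∈ {0,1}^K let D_m be the K×n_m matrix whose columns are the standard basis vectors e_t for the indices t with m_t = 1, and V_m(Σ) = D_m (D_m^T Σ D_m)^{-1} D_m^T. If M is a random vector taking values in {0,1}^K with P(M = 1_K) > 0 (and V_m := 0 when m = 0), then E[V_M(Σ)] is positive definite. -/
open Matrix BigOperators Finset

/-- The `K × n_m` selection matrix `D_m` whose columns are the standard basis vectors
`e_t` for the indices `t` with `m t = true` (columns indexed by the subtype of such `t`). -/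
noncomputable def selMat (K : ℕ) (m : Fin K → Bool) :
    Matrix (Fin K) {t : Fin K // m t = true} ℝ :=
  Matrix.of fun i j => if i = (j : Fin K) then 1 else 0

/-- `V_m(Σ) = D_m (D_mᵀ Σ D_m)⁻¹ D_mᵀ`.  When `m = 0` the column index type is empty,
so this is the zero matrix, matching the convention `V_0(Σ) = 0`. -/
noncomputable def Vm (K : ℕ) (S : Matrix (Fin K) (Fin K) ℝ) (m : Fin K → Bool) :
    Matrix (Fin K) (Fin K) ℝ :=
  selMat K m * ((selMat K m)ᵀ * S * selMat K m)⁻¹ * (selMat K m)ᵀ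

/-- `E[V_M(Σ)] = ∑ m P(M = m) V_m(Σ)`. -/
noncomputable def EVm (K : ℕ) (S : Matrix (Fin K) (Fin K) ℝ)
    (p : (Fin K → Bool) → ℝ) : Matrix (Fin K) (Fin K) ℝ :=
  ∑ m : Fin K → Bool, p m • Vm K S m

/-! Each `V_m(Σ)` is a congruence transform of the positive definite matrix
`(D_mᵀ Σ D_m)⁻¹`, hence positive semidefinite; for the full pattern `D_m` is a bijective
relabelling of coordinates, so `V_m(Σ)` is positive definite, and it enters `E[V_M(Σ)]`
with positive weight. -/

section selMat

variable {K : ℕ} {m : Fin K → Bool}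

theorem selMat_mulVec_apply (y : {t : Fin K // m t = true} → ℝ) (j : {t : Fin K // m t = true}) :
    (selMat K m *ᵥ y) j = y j := by
  simp only [mulVec, dotProduct, selMat, of_apply, ite_mul, one_mul, zero_mul]
  rw [Finset.sum_eq_single_of_mem j (Finset.mem_univ _) fun k _ hk => if_neg fun h => hk ?_]
  · simp
  · exact Subtype.ext h.symm

theorem vecMul_selMat_apply (x : Fin K → ℝ) (j : {t : Fin K // m t = true}) :
    (x ᵥ* selMat K m) j = x j := by
  simp [vecMul, dotProduct, selMat]

theorem selMat_mulVec_injective : Function.Injective (selMat K m).mulVec := fun y z h =>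
  funext fun j => by rw [← selMat_mulVec_apply y j, ← selMat_mulVec_apply z j, h]

theorem selMat_vecMul_injective (hm : ∀ t, m t = true) :
    Function.Injective (selMat K m).vecMul := fun x y h =>
  funext fun t => by
    rw [← vecMul_selMat_apply x ⟨t, hm t⟩, ← vecMul_selMat_apply y ⟨t, hm t⟩]
    exact congrFun h _

end selMat

section Vm

variable {K : ℕ} {S : Matrix (Fin K) (Fin K) ℝ}

theorem Matrix.PosDef.selMat_transpose_mul_mul (hS : S.PosDef) (m : Fin K → Bool) :
    ((selMat K m)ᵀ * S * selMat K m).PosDef := by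
  simpa only [conjTranspose_eq_transpose_of_trivial] using
    hS.conjTranspose_mul_mul_same selMat_mulVec_injective

theorem Vm_posSemidef (hS : S.PosDef) (m : Fin K → Bool) : (Vm K S m).PosSemidef := by
  simpa only [Vm, conjTranspose_eq_transpose_of_trivial] using
    (hS.selMat_transpose_mul_mul m).inv.posSemidef.mul_mul_conjTranspose_same (selMat K m)

theorem Vm_posDef (hS : S.PosDef) {m : Fin K → Bool} (hm : ∀ t, m t = true) :
    (Vm K S m).PosDef := by
  simpa only [Vm, conjTranspose_eq_transpose_of_trivial] using
    (hS.selMat_transpose_mul_mul m).inv.mul_mul_conjTranspose_same (selMat_vecMul_injective hm)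

end Vm

theorem stmt1_general (K : ℕ)
    (S : Matrix (Fin K) (Fin K) ℝ) (hS : S.PosDef)
    (p : (Fin K → Bool) → ℝ) (hp0 : ∀ m, 0 ≤ p m)
    (hfull : 0 < p (fun _ => true)) :
    (EVm K S p).PosDef := by
  rw [EVm, ← Finset.add_sum_erase _ _ (Finset.mem_univ fun _ => true)]
  exact ((Vm_posDef hS fun _ => rfl).smul hfull).add_posSemidef
    (posSemidef_sum _ fun m _ => (Vm_posSemidef hS m).smul (hp0 m))

/-- Lemma 1(1): if `Σ` is positive definite and `M` is a random binary
vector with `P(M = 1_K) > 0`, then `E[V_M(Σ)]` is positive definite. -/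
theorem stmt1 (K : ℕ) (hK : 1 ≤ K)
    (S : Matrix (Fin K) (Fin K) ℝ) (hS : S.PosDef)
    (p : (Fin K → Bool) → ℝ) (hp0 : ∀ m, 0 ≤ p m) (hp1 : ∑ m, p m = 1)
    (hfull : 0 < p (fun _ => true)) :
    (EVm K S p).PosDef :=
  stmt1_general K S hS p hp0 hfull
end

section
/- With Σ K×K positive definite, K ≥ 2, the equality e_K^T E[V_M(Σ)]^{-1} e_K = P(M_K = 1)^{-1} e_K^T Σ e_K holds if and only if P(M_t = 1, M_K = 0) · σ_{t,K} = 0 for every t = 1,...,K−1, where σ_{t,K} = e_t^T Σ e_K. -/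
/-!
Write `σ` for the `k`-th column of `Σ` and `P = P(M_k = 1)`. Each `V_m` is positive
semidefinite, `V_m σ = e_k` when `m_k = 1`, and `V_m σ = 0` when `σ` vanishes on the support
of `m`. Under the condition on the `σ_{t,k}` this gives `E[V_M] σ = P e_k`, hence the equality.
Conversely, let `x = E[V_M]⁻¹ e_k`, so that `xᵀ E[V_M] x = x_k`. For `m_k = 1`, expanding at
`y = x - σ / P` gives `xᵀ V_m x = 2 x_k / P - σ_kk / P² + yᵀ V_m y`; once `x_k = σ_kk / P`,
the remaining nonnegative terms `yᵀ V_m y` (for `m_k = 1`) and `xᵀ V_m x` (for `m_k = 0`),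
weighted by `P(M = m)`, sum to zero. The full pattern then forces `x = σ / P`, and any pattern with
`m_k = 0` and positive probability forces `x`, hence `σ`, to vanish on its support.
-/

open Matrix BigOperators Finset

namespace Matrix

variable {ι : Type*} [Fintype ι] [DecidableEq ι]

lemma dotProduct_sub_smul_mulVec_sub_smul {V : Matrix ι ι ℝ} (hV : V.IsSymm) {s : ι → ℝ}
    {k : ι} (hs : V *ᵥ s = Pi.single k 1) (x : ι → ℝ) (c : ℝ) :
    (x - c • s) ⬝ᵥ V *ᵥ (x - c • s) = x ⬝ᵥ V *ᵥ x - 2 * c * x k + c ^ 2 * s k := by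
  have hsV : s ᵥ* V = Pi.single k 1 := by rw [← mulVec_transpose, hV.eq, hs]
  simp only [mulVec_sub, mulVec_smul, hs, dotProduct_sub, dotProduct_smul, sub_dotProduct,
    smul_dotProduct, dotProduct_mulVec s, hsV, dotProduct_single, single_dotProduct, smul_eq_mul,
    Pi.sub_apply, Pi.smul_apply]
  ring

lemma dotProduct_mulVec_inv_mulVec_single {A : Matrix ι ι ℝ} (hA : IsUnit A.det) (k : ι) :
    (A⁻¹ *ᵥ Pi.single k 1) ⬝ᵥ A *ᵥ (A⁻¹ *ᵥ Pi.single k 1) = A⁻¹ k k := by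
  rw [mulVec_mulVec, mul_nonsing_inv _ hA, one_mulVec, dotProduct_single, mul_one,
    mulVec_single_one]
  rfl

end Matrix

noncomputable def Sm (K : ℕ) (S : Matrix (Fin K) (Fin K) ℝ) (m : Fin K → Bool) :
    Matrix {t : Fin K // m t = true} {t : Fin K // m t = true} ℝ :=
  S.submatrix Subtype.val Subtype.val

variable {K : ℕ} {S : Matrix (Fin K) (Fin K) ℝ} {m : Fin K → Bool}

lemma posDef_Sm (hS : S.PosDef) : (Sm K S m).PosDef :=
  hS.submatrix Subtype.val_injective

lemma selMat_transpose_mulVec (x : Fin K → ℝ) :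
    (selMat K m)ᵀ *ᵥ x = fun j : {t // m t = true} => x j := by
  ext j
  simp [selMat, mulVec, dotProduct]

lemma selMat_mulVec_single (j : {t : Fin K // m t = true}) :
    selMat K m *ᵥ Pi.single j 1 = Pi.single (j : Fin K) 1 := by
  ext i
  simp [selMat, Pi.single_apply]

lemma selMat_transpose_mul_mul_selMat :
    (selMat K m)ᵀ * S * selMat K m = Sm K S m := by
  ext j j'
  simp [mul_apply, selMat, Sm]

lemma Vm_eq : Vm K S m = selMat K m * (Sm K S m)⁻¹ * (selMat K m)ᵀ := by
  rw [Vm, selMat_transpose_mul_mul_selMat]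

lemma posSemidef_Vm (hS : S.PosDef) : (Vm K S m).PosSemidef := by
  rw [Vm_eq, ← conjTranspose_eq_transpose_of_trivial]
  exact (posDef_Sm hS).inv.posSemidef.mul_mul_conjTranspose_same _

lemma dotProduct_Vm_mulVec_nonneg (hS : S.PosDef) (x : Fin K → ℝ) :
    0 ≤ x ⬝ᵥ Vm K S m *ᵥ x := by
  simpa using (posSemidef_Vm hS).dotProduct_mulVec_nonneg x

lemma dotProduct_Vm_mulVec (x : Fin K → ℝ) :
    x ⬝ᵥ Vm K S m *ᵥ x
      = (fun j : {t // m t = true} => x j)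
          ⬝ᵥ (Sm K S m)⁻¹ *ᵥ fun j : {t // m t = true} => x j := by
  rw [Vm_eq, ← mulVec_mulVec, ← mulVec_mulVec, dotProduct_mulVec x, ← mulVec_transpose,
    selMat_transpose_mulVec]

lemma eq_zero_of_dotProduct_Vm_mulVec_eq_zero (hS : S.PosDef) {x : Fin K → ℝ}
    (h : x ⬝ᵥ Vm K S m *ᵥ x = 0) (t : Fin K) (ht : m t = true) : x t = 0 := by
  rw [dotProduct_Vm_mulVec] at h
  by_contra hx
  have hpos := (posDef_Sm hS).inv.dotProduct_mulVec_pos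
    (x := fun j : {t // m t = true} => x j) fun h0 => hx (congrFun h0 ⟨t, ht⟩)
  rw [star_trivial, h] at hpos
  exact hpos.false

lemma Vm_mulVec_of_forall_eq_zero {x : Fin K → ℝ} (h : ∀ t, m t = true → x t = 0) :
    Vm K S m *ᵥ x = 0 := by
  have h0 : (selMat K m)ᵀ *ᵥ x = 0 := by
    rw [selMat_transpose_mulVec]
    exact funext fun j => h j j.2
  rw [Vm, ← mulVec_mulVec, ← mulVec_mulVec, h0, mulVec_zero, mulVec_zero]

lemma Vm_mulVec_col (hS : S.PosDef) {k : Fin K} (hk : m k = true) :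
    Vm K S m *ᵥ (fun i => S i k) = Pi.single k 1 := by
  have hB := (posDef_Sm (m := m) hS).isUnit
  have hcol : (selMat K m)ᵀ *ᵥ (fun i => S i k)
      = Sm K S m *ᵥ Pi.single (⟨k, hk⟩ : {t // m t = true}) 1 := by
    rw [selMat_transpose_mulVec, mulVec_single_one]
    rfl
  simp only [Vm_eq, ← mulVec_mulVec]
  rw [hcol, mulVec_mulVec (M := (Sm K S m)⁻¹),
    nonsing_inv_mul _ ((isUnit_iff_isUnit_det _).mp hB), one_mulVec, selMat_mulVec_single]

lemma dotProduct_Vm_mulVec_eq_add (hS : S.PosDef) {k : Fin K} (hk : m k = true)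
    (x : Fin K → ℝ) (c : ℝ) :
    x ⬝ᵥ Vm K S m *ᵥ x = 2 * c * x k - c ^ 2 * S k k
      + (x - c • fun i => S i k) ⬝ᵥ Vm K S m *ᵥ (x - c • fun i => S i k) := by
  rw [dotProduct_sub_smul_mulVec_sub_smul
    (isHermitian_iff_isSymm.mp (posSemidef_Vm hS).isHermitian) (Vm_mulVec_col hS hk)]
  ring

variable {p : (Fin K → Bool) → ℝ}

lemma dotProduct_EVm_mulVec (x : Fin K → ℝ) :
    x ⬝ᵥ EVm K S p *ᵥ x = ∑ m, p m * (x ⬝ᵥ Vm K S m *ᵥ x) := by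
  simp [EVm, sum_mulVec, dotProduct_sum, smul_mulVec, dotProduct_smul]

lemma posDef_EVm (hS : S.PosDef) (hp0 : ∀ m, 0 ≤ p m) (hfull : 0 < p fun _ => true) :
    (EVm K S p).PosDef := by
  have hsemi : (EVm K S p).PosSemidef :=
    posSemidef_sum _ fun m _ => (posSemidef_Vm hS).smul (hp0 m)
  refine PosDef.of_dotProduct_mulVec_pos hsemi.isHermitian fun x hx => ?_
  rw [star_trivial, dotProduct_EVm_mulVec]
  have hterm : ∀ m, 0 ≤ p m * (x ⬝ᵥ Vm K S m *ᵥ x) := fun m =>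
    mul_nonneg (hp0 m) (dotProduct_Vm_mulVec_nonneg hS x)
  have hfull_term : 0 < x ⬝ᵥ Vm K S (fun _ => true) *ᵥ x := by
    refine (dotProduct_Vm_mulVec_nonneg hS x).lt_of_ne ?_
    intro h0
    exact hx (funext fun t => eq_zero_of_dotProduct_Vm_mulVec_eq_zero hS h0.symm t rfl)
  exact (mul_pos hfull hfull_term).trans_le (single_le_sum (fun m _ => hterm m) (mem_univ _))

lemma sum_filter_pos_of_pos_full (hp0 : ∀ m, 0 ≤ p m) (hfull : 0 < p fun _ => true)
    (k : Fin K) :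
    0 < ∑ m ∈ univ.filter fun m => m k = true, p m :=
  hfull.trans_le (single_le_sum (fun m _ => hp0 m) (by simp))

lemma EVm_mulVec_col (hS : S.PosDef) {k : Fin K}
    (hcol : ∀ m, m k = false → p m ≠ 0 → ∀ t, m t = true → S t k = 0) :
    EVm K S p *ᵥ (fun i => S i k)
      = (∑ m ∈ univ.filter fun m => m k = true, p m) • Pi.single k 1 := by
  have hterm : ∀ m, p m • Vm K S m *ᵥ (fun i => S i k)
      = if m k = true then p m • Pi.single k 1 else 0 := by
    intro m
    split_ifs with hmk
    · rw [Vm_mulVec_col hS hmk]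
    · by_cases hpm : p m = 0
      · rw [hpm, zero_smul]
      · rw [Vm_mulVec_of_forall_eq_zero (hcol m (by simpa using hmk) hpm), smul_zero]
  simp only [EVm, sum_mulVec, smul_mulVec, hterm, sum_ite, sum_const_zero, add_zero, sum_smul]

lemma EVm_inv_apply_self_of_col (hS : S.PosDef) (hp0 : ∀ m, 0 ≤ p m)
    (hfull : 0 < p fun _ => true) {k : Fin K}
    (hcol : ∀ m, m k = false → p m ≠ 0 → ∀ t, m t = true → S t k = 0) :
    (EVm K S p)⁻¹ k k = (∑ m ∈ univ.filter fun m => m k = true, p m)⁻¹ * S k k := by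
  have hdet : IsUnit (EVm K S p).det :=
    (isUnit_iff_isUnit_det _).mp (posDef_EVm hS hp0 hfull).isUnit
  have h := congrArg (fun v => ((EVm K S p)⁻¹ *ᵥ v) k) (EVm_mulVec_col hS hcol)
  simp only [mulVec_mulVec, nonsing_inv_mul _ hdet, one_mulVec, mulVec_smul,
    mulVec_single_one, Pi.smul_apply, smul_eq_mul] at h
  rw [h, inv_mul_cancel_left₀ (sum_filter_pos_of_pos_full hp0 hfull k).ne']
  rfl

lemma col_of_EVm_inv_apply_self (hS : S.PosDef) (hp0 : ∀ m, 0 ≤ p m)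
    (hfull : 0 < p fun _ => true) {k : Fin K}
    (h : (EVm K S p)⁻¹ k k = (∑ m ∈ univ.filter fun m => m k = true, p m)⁻¹ * S k k) :
    ∀ m, m k = false → p m ≠ 0 → ∀ t, m t = true → S t k = 0 := by
  set P := ∑ m ∈ univ.filter fun m => m k = true, p m
  have hP : 0 < P := sum_filter_pos_of_pos_full hp0 hfull k
  set x := (EVm K S p)⁻¹ *ᵥ Pi.single k 1
  have hxk : x k = P⁻¹ * S k k := by simp [x, h]
  have hxAx : x ⬝ᵥ EVm K S p *ᵥ x = P⁻¹ * S k k := by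
    rw [dotProduct_mulVec_inv_mulVec_single
      ((isUnit_iff_isUnit_det _).mp (posDef_EVm hS hp0 hfull).isUnit), h]
  set y := x - P⁻¹ • fun i => S i k with hy
  set g : (Fin K → Bool) → ℝ := fun m =>
    if m k = true then y ⬝ᵥ Vm K S m *ᵥ y else x ⬝ᵥ Vm K S m *ᵥ x
  have hg_nonneg : ∀ m, 0 ≤ p m * g m := fun m => mul_nonneg (hp0 m) (by
    simp only [g]
    split_ifs <;> exact dotProduct_Vm_mulVec_nonneg hS _)
  have hsplit : ∀ m, p m * (x ⬝ᵥ Vm K S m *ᵥ x)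
      = (if m k = true then p m * (S k k / P ^ 2) else 0) + p m * g m := by
    intro m
    simp only [g]
    split_ifs with hmk
    · rw [dotProduct_Vm_mulVec_eq_add hS hmk x P⁻¹, ← hy, hxk]
      field_simp
      ring
    · ring
  have hsum : ∑ m, p m * g m = 0 := by
    have := dotProduct_EVm_mulVec (S := S) (p := p) x
    rw [hxAx, sum_congr rfl fun m _ => hsplit m, sum_add_distrib, ← sum_filter,
      ← sum_mul] at this
    have hP_term : P * (S k k / P ^ 2) = P⁻¹ * S k k := by field_simp
    linarith
  have hg_zero : ∀ m, p m ≠ 0 → g m = 0 := fun m hpm =>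
    (mul_eq_zero.mp ((sum_eq_zero_iff_of_nonneg fun m _ => hg_nonneg m).mp hsum m
      (mem_univ _))).resolve_left hpm
  have hx_col : ∀ t, x t = P⁻¹ * S t k := by
    intro t
    have hyt := eq_zero_of_dotProduct_Vm_mulVec_eq_zero hS
      (by simpa [g] using hg_zero _ hfull.ne') t rfl
    simpa [y, sub_eq_zero] using hyt
  intro m hmk hpm t hmt
  have hxt := eq_zero_of_dotProduct_Vm_mulVec_eq_zero hS
    (by simpa [g, hmk] using hg_zero m hpm) t hmt
  rw [hx_col] at hxt
  exact (mul_eq_zero.mp hxt).resolve_left (inv_ne_zero hP.ne')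

lemma forall_sum_filter_mul_eq_zero_iff (hp0 : ∀ m, 0 ≤ p m) (k : Fin K) :
    (∀ t, t ≠ k →
        (∑ m ∈ univ.filter fun m => m t = true ∧ m k = false, p m) * S t k = 0)
      ↔ ∀ m, m k = false → p m ≠ 0 → ∀ t, m t = true → S t k = 0 := by
  constructor
  · intro h m hmk hpm t hmt
    have htk : t ≠ k := by rintro rfl; simp [hmt] at hmk
    refine (mul_eq_zero.mp (h t htk)).resolve_left fun hsum => hpm ?_
    exact (sum_eq_zero_iff_of_nonneg fun m _ => hp0 m).mp hsum m (by simp [hmt, hmk])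
  · intro h t _
    by_cases hSt : S t k = 0
    · rw [hSt, mul_zero]
    · refine mul_eq_zero_of_left (sum_eq_zero fun m hm => ?_) _
      rw [mem_filter] at hm
      by_contra hpm
      exact hSt (h m hm.2.2 hpm t hm.2.1)

theorem EVm_inv_apply_self_eq_iff (hS : S.PosDef) (hp0 : ∀ m, 0 ≤ p m)
    (hfull : 0 < p fun _ => true) (k : Fin K) :
    (EVm K S p)⁻¹ k k = (∑ m ∈ univ.filter fun m => m k = true, p m)⁻¹ * S k k
      ↔ ∀ t, t ≠ k →
          (∑ m ∈ univ.filter fun m => m t = true ∧ m k = false, p m) * S t k = 0 := by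
  rw [forall_sum_filter_mul_eq_zero_iff hp0]
  exact ⟨col_of_EVm_inv_apply_self hS hp0 hfull, EVm_inv_apply_self_of_col hS hp0 hfull⟩

theorem stmt3_general (K : ℕ)
    (S : Matrix (Fin (K+2)) (Fin (K+2)) ℝ) (hS : S.PosDef)
    (p : (Fin (K+2) → Bool) → ℝ) (hp0 : ∀ m, 0 ≤ p m)
    (hfull : 0 < p (fun _ => true)) :
    (EVm (K+2) S p)⁻¹ (Fin.last (K+1)) (Fin.last (K+1))
        = (∑ m ∈ Finset.univ.filter (fun m => m (Fin.last (K+1)) = true), p m)⁻¹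
          * S (Fin.last (K+1)) (Fin.last (K+1))
      ↔ ∀ t : Fin (K+2), t ≠ Fin.last (K+1) →
          (∑ m ∈ Finset.univ.filter
              (fun m => m t = true ∧ m (Fin.last (K+1)) = false), p m)
            * S t (Fin.last (K+1)) = 0 :=
  EVm_inv_apply_self_eq_iff hS hp0 hfull (Fin.last (K+1))

/-- Lemma 1(2), equality condition: for `K ≥ 2` (here `K+2`), the equality
`e_Kᵀ E[V_M(Σ)]⁻¹ e_K = P(M_K = 1)⁻¹ e_Kᵀ Σ e_K` holds if and only if
`P(M_t = 1, M_K = 0) · σ_{t,K} = 0` for every `t ≠ K`. -/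
theorem stmt3 (K : ℕ)
    (S : Matrix (Fin (K+2)) (Fin (K+2)) ℝ) (hS : S.PosDef)
    (p : (Fin (K+2) → Bool) → ℝ) (hp0 : ∀ m, 0 ≤ p m) (hp1 : ∑ m, p m = 1)
    (hfull : 0 < p (fun _ => true)) :
    (EVm (K+2) S p)⁻¹ (Fin.last (K+1)) (Fin.last (K+1))
        = (∑ m ∈ Finset.univ.filter (fun m => m (Fin.last (K+1)) = true), p m)⁻¹
          * S (Fin.last (K+1)) (Fin.last (K+1))
      ↔ ∀ t : Fin (K+2), t ≠ Fin.last (K+1) →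
          (∑ m ∈ Finset.univ.filter
              (fun m => m t = true ∧ m (Fin.last (K+1)) = false), p m)
            * S t (Fin.last (K+1)) = 0 :=
  stmt3_general K S hS p hp0 hfull
end

section
/- Counterexample computation: Let Σ_1 = [[4,−3],[−3,4]], Σ_0 = [[4,3],[3,4]], π_1 = 1/3, π_0 = 2/3, and let p_{(1,0)} = p_{(0,1)} = p_{(1,1)} = 1/3 be probabilities on binary patterns m ∈ {0,1}². Set Σ̄ = π_0 Σ_0 + π_1 Σ_1 = [[4,1],[1,4]] and C = π_0^{-1} Σ_0 + π_1^{-1} Σ_1 = (9/2)[[4,−1],[−1,4]]. Define V_m(B) = D_m(D_m^T B D_m)^{-1}D_m^T with the coordinate-selection matrices D_m. Then: (i) P(M_2=1)^{-1} e_2^T C e_2 = 27 (using P(M_2=1) = 2/3); (ii) E[V_M(Σ̄)] = (1/180)[[31,−4],[−4,31]] and E[V_M(Σ̄) C V_M(Σ̄)] = (1/600)[[529,−196],[−196,529]]; (iii) e_2^T E[V_M(Σ̄)]^{-1} E[V_M(Σ̄) C V_M(Σ̄)] E[V_M(Σ̄)]^{-1} e_2 = 12486/441 > 27. -/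
open Matrix BigOperators Finset

lemma sum_sel {K : ℕ} (m : Fin K → Bool) (f : {t : Fin K // m t = true} → ℝ) (i : Fin K) :
    ∑ a : {t : Fin K // m t = true}, (if i = (a : Fin K) then f a else 0)
      = if h : m i = true then f ⟨i, h⟩ else 0 := by
  by_cases h : m i = true
  · rw [dif_pos h, Finset.sum_eq_single ⟨i, h⟩]
    · simp
    · rintro ⟨b, hb⟩ - hne
      rw [if_neg]
      rintro rfl
      exact hne rfl
    · simp
  · rw [dif_neg h]
    apply Finset.sum_eq_zero
    rintro ⟨a, ha⟩ -
    rw [if_neg]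
    rintro rfl
    exact h ha

lemma Vm_apply {K : ℕ} (S : Matrix (Fin K) (Fin K) ℝ) (m : Fin K → Bool) (i j : Fin K) :
    Vm K S m i j = if hj : m j = true then
      (if hi : m i = true then ((selMat K m)ᵀ * S * selMat K m)⁻¹ ⟨i, hi⟩ ⟨j, hj⟩ else 0)
      else 0 := by
  set B := ((selMat K m)ᵀ * S * selMat K m)⁻¹ with hB
  rw [show Vm K S m = selMat K m * B * (selMat K m)ᵀ from rfl]
  simp only [Matrix.mul_apply, Matrix.transpose_apply, selMat, Matrix.of_apply,
    ite_mul, one_mul, zero_mul, mul_ite, mul_one, mul_zero]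
  rw [sum_sel m (fun b => ∑ a : {t : Fin K // m t = true},
    (if i = (a : Fin K) then B a b else 0)) j]
  by_cases hj : m j = true
  · rw [dif_pos hj, dif_pos hj, sum_sel]
  · rw [dif_neg hj, dif_neg hj]

lemma inner_eq {K : ℕ} (S : Matrix (Fin K) (Fin K) ℝ) (m : Fin K → Bool) :
    (selMat K m)ᵀ * S * selMat K m = S.submatrix (Subtype.val) (Subtype.val) := by
  ext a b
  simp [Matrix.mul_apply, selMat, Matrix.transpose_apply, ite_mul, mul_ite,
    Finset.sum_ite_eq, Finset.sum_ite_eq']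

lemma Vm_full (S : Matrix (Fin 2) (Fin 2) ℝ) (m : Fin 2 → Bool) (h : ∀ t, m t = true) :
    Vm 2 S m = S⁻¹ := by
  ext i j
  rw [Vm_apply, dif_pos (h j), dif_pos (h i), inner_eq]
  have : (S.submatrix (Subtype.val) (Subtype.val) :
      Matrix {t : Fin 2 // m t = true} {t : Fin 2 // m t = true} ℝ)
      = S.submatrix (Equiv.subtypeUnivEquiv h) (Equiv.subtypeUnivEquiv h) := rfl
  rw [this, Matrix.inv_submatrix_equiv]
  rfl

lemma Vm_e0 (S : Matrix (Fin 2) (Fin 2) ℝ) :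
    Vm 2 S ![true, false] = !![(S 0 0)⁻¹, 0; 0, 0] := by
  letI : Unique {t : Fin 2 // ![true, false] t = true} :=
    { default := ⟨0, rfl⟩
      uniq := by
        rintro ⟨t, ht⟩
        fin_cases t
        · rfl
        · simp at ht }
  have hB : ((selMat 2 ![true, false])ᵀ * S * selMat 2 ![true, false])⁻¹ =
      fun _ _ => (S 0 0)⁻¹ := by
    rw [inner_eq, Matrix.inv_def, Matrix.adjugate_subsingleton, Matrix.det_unique]
    funext a b
    rw [Unique.eq_default a, Unique.eq_default b]
    simp [Matrix.submatrix_apply, Ring.inverse_eq_inv']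
    rfl
  ext i j
  rw [Vm_apply, hB]
  fin_cases i <;> fin_cases j <;> simp

lemma Vm_e1 (S : Matrix (Fin 2) (Fin 2) ℝ) :
    Vm 2 S ![false, true] = !![0, 0; 0, (S 1 1)⁻¹] := by
  letI : Unique {t : Fin 2 // ![false, true] t = true} :=
    { default := ⟨1, rfl⟩
      uniq := by
        rintro ⟨t, ht⟩
        fin_cases t
        · simp at ht
        · rfl }
  have hB : ((selMat 2 ![false, true])ᵀ * S * selMat 2 ![false, true])⁻¹ =
      fun _ _ => (S 1 1)⁻¹ := by
    rw [inner_eq, Matrix.inv_def, Matrix.adjugate_subsingleton, Matrix.det_unique]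
    funext a b
    rw [Unique.eq_default a, Unique.eq_default b]
    simp [Matrix.submatrix_apply, Ring.inverse_eq_inv']
    rfl
  ext i j
  rw [Vm_apply, hB]
  fin_cases i <;> fin_cases j <;> simp

lemma sum_fin2_bool {M : Type*} [AddCommMonoid M] (f : (Fin 2 → Bool) → M) :
    ∑ m : Fin 2 → Bool, f m
      = f ![false, false] + f ![false, true] + f ![true, false] + f ![true, true] := by
  rw [← Equiv.sum_comp (finTwoArrowEquiv Bool).symm f]
  rw [Fintype.sum_prod_type]
  simp only [Fintype.sum_bool]
  show f ![true, true] + f ![true, false] + (f ![false, true] + f ![false, false]) = _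
  abel

/-- the counterexample computation showing ANCOVA can be strictly more
precise than MMRM-II.  With `Σ_1 = [[4,−3],[−3,4]]`, `Σ_0 = [[4,3],[3,4]]`,
`π_1 = 1/3`, `π_0 = 2/3`, and `p_m = 1/3` on each of the three nonzero patterns,
`Σ̄ = π_0Σ_0 + π_1Σ_1 = [[4,1],[1,4]]`, `C = π_0⁻¹Σ_0 + π_1⁻¹Σ_1 = (9/2)[[4,−1],[−1,4]]`,
`P(M_2=1)⁻¹ e_2ᵀ C e_2 = 27`, `E[V_M(Σ̄)] = (1/180)[[31,−4],[−4,31]]`,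
`E[V_M(Σ̄) C V_M(Σ̄)] = (1/600)[[529,−196],[−196,529]]`, and
`e_2ᵀ E[V_M(Σ̄)]⁻¹ E[V_M(Σ̄) C V_M(Σ̄)] E[V_M(Σ̄)]⁻¹ e_2 = 12486/441 > 27`. -/
theorem stmt14 :
    let S1 : Matrix (Fin 2) (Fin 2) ℝ := !![4, -3; -3, 4]
    let S0 : Matrix (Fin 2) (Fin 2) ℝ := !![4, 3; 3, 4]
    let Sbar : Matrix (Fin 2) (Fin 2) ℝ := (2/3 : ℝ) • S0 + (1/3 : ℝ) • S1
    let C : Matrix (Fin 2) (Fin 2) ℝ := (2/3 : ℝ)⁻¹ • S0 + (1/3 : ℝ)⁻¹ • S1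
    let p : (Fin 2 → Bool) → ℝ := fun m => if m = (fun _ => false) then 0 else 1/3
    let EV : Matrix (Fin 2) (Fin 2) ℝ := EVm 2 Sbar p
    let EVCV : Matrix (Fin 2) (Fin 2) ℝ :=
      ∑ m : Fin 2 → Bool, p m • (Vm 2 Sbar m * C * Vm 2 Sbar m)
    Sbar = !![4, 1; 1, 4] ∧
    C = (9/2 : ℝ) • !![4, -1; -1, 4] ∧
    (∑ m ∈ Finset.univ.filter (fun m : Fin 2 → Bool => m 1 = true), p m) = 2/3 ∧
    (2/3 : ℝ)⁻¹ * C 1 1 = 27 ∧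
    EV = (1/180 : ℝ) • !![31, -4; -4, 31] ∧
    EVCV = (1/600 : ℝ) • !![529, -196; -196, 529] ∧
    (EV⁻¹ * EVCV * EV⁻¹) 1 1 = 12486 / 441 ∧
    (27 : ℝ) < 12486 / 441 := by
  intro S1 S0 Sbar C p EV EVCV
  have hSbar : Sbar = !![4, 1; 1, 4] := by
    show (2/3 : ℝ) • !![4, 3; 3, 4] + (1/3 : ℝ) • !![4, -3; -3, 4] = _
    ext i j
    fin_cases i <;> fin_cases j <;> norm_num
  have hC : C = !![18, -9/2; -9/2, 18] := by
    show (2/3 : ℝ)⁻¹ • !![4, 3; 3, 4] + (1/3 : ℝ)⁻¹ • !![4, -3; -3, 4] = _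
    ext i j
    fin_cases i <;> fin_cases j <;> norm_num
  have hC' : C = (9/2 : ℝ) • !![4, -1; -1, 4] := by
    rw [hC]; ext i j; fin_cases i <;> fin_cases j <;> norm_num
  have hSinv : Sbar⁻¹ = !![4/15, -1/15; -1/15, 4/15] := by
    rw [hSbar]
    apply Matrix.inv_eq_right_inv
    ext i j
    fin_cases i <;> fin_cases j <;>
      norm_num [Matrix.mul_apply, Fin.sum_univ_two]
  have hpff : p (![false, false]) = 0 := by
    show (if _ then _ else _) = _
    rw [if_pos]
    funext i; fin_cases i <;> rfl
  have hpft : p (![false, true]) = 1/3 := by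
    show (if _ then _ else _) = _
    rw [if_neg]
    intro h
    have := congrFun h 1
    simp at this
  have hptf : p (![true, false]) = 1/3 := by
    show (if _ then _ else _) = _
    rw [if_neg]
    intro h
    have := congrFun h 0
    simp at this
  have hptt : p (![true, true]) = 1/3 := by
    show (if _ then _ else _) = _
    rw [if_neg]
    intro h
    have := congrFun h 0
    simp at this
  have hfull : Vm 2 Sbar ![true, true] = !![4/15, -1/15; -1/15, 4/15] := by
    rw [Vm_full Sbar _ (by intro t; fin_cases t <;> rfl), hSinv]
  have he0 : Vm 2 Sbar ![true, false] = !![1/4, 0; 0, 0] := by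
    rw [Vm_e0, hSbar]; norm_num
  have he1 : Vm 2 Sbar ![false, true] = !![0, 0; 0, 1/4] := by
    rw [Vm_e1, hSbar]; norm_num
  have hEV : EV = (1/180 : ℝ) • !![31, -4; -4, 31] := by
    show EVm 2 Sbar p = _
    rw [EVm, sum_fin2_bool (fun m => p m • Vm 2 Sbar m)]
    simp only [hpff, hpft, hptf, hptt, hfull, he0, he1, zero_smul, zero_add]
    ext i j
    fin_cases i <;> fin_cases j <;>
      norm_num [Matrix.add_apply, Matrix.smul_apply]
  have hEVCV : EVCV = (1/600 : ℝ) • !![529, -196; -196, 529] := by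
    show (∑ m : Fin 2 → Bool, p m • (Vm 2 Sbar m * C * Vm 2 Sbar m)) = _
    rw [sum_fin2_bool (fun m => p m • (Vm 2 Sbar m * C * Vm 2 Sbar m))]
    simp only [hpff, hpft, hptf, hptt, hfull, he0, he1, hC, zero_smul, zero_add]
    ext i j
    fin_cases i <;> fin_cases j <;>
      norm_num [Matrix.add_apply, Matrix.smul_apply, Matrix.mul_apply, Fin.sum_univ_two]
  have hEVinv : EV⁻¹ = !![124/21, 16/21; 16/21, 124/21] := by
    rw [hEV]
    apply Matrix.inv_eq_right_inv
    ext i j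
    fin_cases i <;> fin_cases j <;>
      norm_num [Matrix.mul_apply, Fin.sum_univ_two, Matrix.smul_apply]
  refine ⟨hSbar, hC', ?_, ?_, hEV, hEVCV, ?_, by norm_num⟩
  · rw [Finset.sum_filter, sum_fin2_bool (fun m => if m 1 = true then p m else 0)]
    norm_num [hpff, hpft, hptf, hptt]
  · rw [hC]; norm_num
  · rw [hEVinv, hEVCV]
    norm_num [Matrix.mul_apply, Fin.sum_univ_two, Matrix.smul_apply]
end

section
/- Law of total variance decomposition for comparing variances: for random vectors Z(0),...,Z(J) with finite second moments on a probability space with a discrete random variable S, and probability weights π_0,...,π_J summing to 1, the matrix Σ_j π_j E[Z(j) Z(j)^T] − (Σ_j π_j E[Z(j)])(Σ_j π_j E[Z(j)])^T − [Σ_j π_j E[Var(Z(j)|S)] + Var(Σ_j π_j E[Z(j)|S])] equals E[U (diag(π) − π π^T) U^T], where U is the random matrix with columns E[Z(j)|S], j = 0,...,J; in particular it is positive semi-definite. -/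
open Matrix BigOperators Finset

/-- Expectation of a (vector/matrix-valued) random element on a finite probability
space with weights `μ`. -/
noncomputable def pExp {Ω : Type*} [Fintype Ω] (μ : Ω → ℝ)
    {α : Type*} [AddCommMonoid α] [Module ℝ α] (f : Ω → α) : α :=
  ∑ ω, μ ω • f ω

/-- Conditional expectation given the discrete random variable `S`: at `ω`, the
`μ`-weighted average of `f` over the event `{S = S ω}`. -/
noncomputable def pCondExp {Ω : Type*} [Fintype Ω] (μ : Ω → ℝ)
    {R : ℕ} (S : Ω → Fin R)
    {α : Type*} [AddCommMonoid α] [Module ℝ α] (f : Ω → α) : Ω → α :=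
  fun ω => (∑ ω' ∈ Finset.univ.filter (fun ω' => S ω' = S ω), μ ω')⁻¹ •
    ∑ ω' ∈ Finset.univ.filter (fun ω' => S ω' = S ω), μ ω' • f ω'

/-!
Conditioning on `S` leaves expectations unchanged, so after the tower property the left-hand
side becomes `E[∑ⱼ πⱼ cⱼ cⱼᵀ − W Wᵀ]` with `cⱼ = E[Z(j)|S]` and `W = ∑ⱼ πⱼ cⱼ`. Pointwise this is
`U (diag π − π πᵀ) Uᵀ`, and `diag π − π πᵀ = ∑ⱼ πⱼ (eⱼ − π)(eⱼ − π)ᵀ` is positive semidefinite;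
an expectation of positive semidefinite matrices is positive semidefinite.
-/

namespace Matrix

variable {m n R : Type*} [Fintype n] [DecidableEq n] [CommRing R]

theorem mul_diagonal_sub_vecMulVec_mul_transpose (A : Matrix m n R) (p : n → R) :
    A * (diagonal p - vecMulVec p p) * Aᵀ
      = ∑ j, p j • vecMulVec (fun i => A i j) (fun i => A i j) - vecMulVec (A *ᵥ p) (A *ᵥ p) := by
  rw [Matrix.mul_sub, Matrix.sub_mul, mul_vecMulVec, vecMulVec_mul, vecMul_transpose]
  congr 1
  ext a b
  simp [mul_apply, Matrix.sum_apply, vecMulVec_apply, diagonal_apply, mul_comm, mul_left_comm]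

theorem diagonal_sub_vecMulVec_eq_sum (p : n → R) (hp : ∑ j, p j = 1) :
    diagonal p - vecMulVec p p
      = ∑ j, p j • vecMulVec (Pi.single j 1 - p) (Pi.single j 1 - p) := by
  ext a b
  simp only [Matrix.sub_apply, diagonal_apply, vecMulVec_apply, Matrix.sum_apply,
    Matrix.smul_apply, Pi.sub_apply, Pi.single_apply, mul_sub, mul_ite, mul_one, mul_zero,
    sub_mul, ite_mul, one_mul, zero_mul, smul_eq_mul, Finset.sum_sub_distrib, Finset.sum_ite_eq,
    Finset.mem_univ, if_true, ← Finset.sum_mul, hp, sub_self, sub_zero]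
  split_ifs with h <;> simp [h, mul_comm]

theorem posSemidef_diagonal_sub_vecMulVec {p : n → ℝ} (hp0 : ∀ j, 0 ≤ p j)
    (hp1 : ∑ j, p j = 1) : (diagonal p - vecMulVec p p).PosSemidef :=
  diagonal_sub_vecMulVec_eq_sum p hp1 ▸
    posSemidef_sum _ fun j _ => (posSemidef_vecMulVec_self_star (Pi.single j 1 - p)).smul (hp0 j)

end Matrix

/-- If the weights on `s` sum to `0` they all vanish (being nonnegative), so both sides are `0`
although `0⁻¹ = 0`. -/
theorem sum_smul_inv_smul_weightedSum {Ω α : Type*} [AddCommGroup α] [Module ℝ α]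
    {μ : Ω → ℝ} {s : Finset Ω} (hμ0 : ∀ ω ∈ s, 0 ≤ μ ω) (f : Ω → α) :
    (∑ ω ∈ s, μ ω) • (∑ ω ∈ s, μ ω)⁻¹ • ∑ ω ∈ s, μ ω • f ω = ∑ ω ∈ s, μ ω • f ω := by
  by_cases hs : ∑ ω ∈ s, μ ω = 0
  · have hzero : ∀ ω ∈ s, μ ω = 0 := (Finset.sum_eq_zero_iff_of_nonneg hμ0).mp hs
    rw [hs, zero_smul, eq_comm]
    exact Finset.sum_eq_zero fun ω hω => by rw [hzero ω hω, zero_smul]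
  · exact smul_inv_smul₀ hs _

section FiniteExpectation

variable {Ω : Type*} [Fintype Ω] (μ : Ω → ℝ)
variable {α : Type*} [AddCommGroup α] [Module ℝ α]

theorem pExp_sub (f g : Ω → α) :
    pExp μ (fun ω => f ω - g ω) = pExp μ f - pExp μ g := by
  simp only [pExp, smul_sub, Finset.sum_sub_distrib]

theorem pExp_sum_smul {ι : Type*} [Fintype ι] (c : ι → ℝ) (g : ι → Ω → α) :
    pExp μ (fun ω => ∑ j, c j • g j ω) = ∑ j, c j • pExp μ (g j) := by
  simp only [pExp, Finset.smul_sum]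
  rw [Finset.sum_comm]
  simp only [smul_comm (μ _)]

variable {μ}

theorem pExp_pCondExp (hμ0 : ∀ ω, 0 ≤ μ ω) {R : ℕ} (S : Ω → Fin R) (f : Ω → α) :
    pExp μ (pCondExp μ S f) = pExp μ f := by
  unfold pExp
  rw [← Finset.sum_fiberwise Finset.univ S, ← Finset.sum_fiberwise Finset.univ S]
  refine Finset.sum_congr rfl fun s _ => ?_
  have hfiber : ∀ ω ∈ univ.filter (fun ω => S ω = s), μ ω • pCondExp μ S f ω
      = μ ω • (∑ ω' ∈ univ.filter (fun ω' => S ω' = s), μ ω')⁻¹ •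
          ∑ ω' ∈ univ.filter (fun ω' => S ω' = s), μ ω' • f ω' := by
    intro ω hω
    rw [(Finset.mem_filter.mp hω).2.symm]
    rfl
  rw [Finset.sum_congr rfl hfiber, ← Finset.sum_smul]
  exact sum_smul_inv_smul_weightedSum (fun ω _ => hμ0 ω) f

theorem pExp_posSemidef {n : Type*} [Fintype n] (hμ0 : ∀ ω, 0 ≤ μ ω)
    {f : Ω → Matrix n n ℝ} (hf : ∀ ω, (f ω).PosSemidef) : (pExp μ f).PosSemidef :=
  posSemidef_sum _ fun ω _ => (hf ω).smul (hμ0 ω)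

end FiniteExpectation

theorem stmt17_general (Ω : Type) [Fintype Ω] (μ : Ω → ℝ)
    (hμ0 : ∀ ω, 0 ≤ μ ω)
    (R q J : ℕ) (S : Ω → Fin R)
    (Z : Fin (J+1) → Ω → Fin q → ℝ)
    (pi : Fin (J+1) → ℝ) (hπ0 : ∀ j, 0 ≤ pi j) (hπ1 : ∑ j, pi j = 1) :
    let EZZT : Fin (J+1) → Matrix (Fin q) (Fin q) ℝ := fun j =>
      pExp μ (fun ω => Matrix.vecMulVec (Z j ω) (Z j ω))
    let EZ : Fin (J+1) → Fin q → ℝ := fun j => pExp μ (Z j)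
    let cE : Fin (J+1) → Ω → Fin q → ℝ := fun j => pCondExp μ S (Z j)
    let condVar : Fin (J+1) → Ω → Matrix (Fin q) (Fin q) ℝ := fun j ω =>
      pCondExp μ S (fun ω' => Matrix.vecMulVec (Z j ω') (Z j ω')) ω
        - Matrix.vecMulVec (cE j ω) (cE j ω)
    let W : Ω → Fin q → ℝ := fun ω => ∑ j, pi j • cE j ω
    let VarW : Matrix (Fin q) (Fin q) ℝ :=
      pExp μ (fun ω => Matrix.vecMulVec (W ω) (W ω))
        - Matrix.vecMulVec (pExp μ W) (pExp μ W)
    let U : Ω → Matrix (Fin q) (Fin (J+1)) ℝ := fun ω =>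
      Matrix.of fun i j => cE j ω i
    let LHS : Matrix (Fin q) (Fin q) ℝ :=
      (∑ j, pi j • EZZT j)
        - Matrix.vecMulVec (∑ j, pi j • EZ j) (∑ j, pi j • EZ j)
        - ((∑ j, pi j • pExp μ (condVar j)) + VarW)
    LHS = pExp μ
        (fun ω => U ω * (Matrix.diagonal pi - Matrix.vecMulVec pi pi) * (U ω)ᵀ) ∧
    LHS.PosSemidef := by
  intro EZZT EZ cE condVar W VarW U LHS
  have hCondVar (j) : pExp μ (condVar j)
      = EZZT j - pExp μ (fun ω => vecMulVec (cE j ω) (cE j ω)) := by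
    rw [pExp_sub, pExp_pCondExp hμ0]
  have hW : pExp μ W = ∑ j, pi j • EZ j := by
    simp only [W, pExp_sum_smul, cE, pExp_pCondExp hμ0, EZ]
  have hU (ω) : U ω * (diagonal pi - vecMulVec pi pi) * (U ω)ᵀ
      = ∑ j, pi j • vecMulVec (cE j ω) (cE j ω) - vecMulVec (W ω) (W ω) := by
    rw [mul_diagonal_sub_vecMulVec_mul_transpose]
    congr 3 <;> ext i <;> simp [U, W, mulVec, dotProduct, Finset.sum_apply, mul_comm]
  have hLHS : LHS = pExp μ
      (fun ω => U ω * (diagonal pi - vecMulVec pi pi) * (U ω)ᵀ) := by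
    simp only [hU, pExp_sub, pExp_sum_smul, LHS, VarW, hW, hCondVar, smul_sub,
      Finset.sum_sub_distrib]
    abel
  refine ⟨hLHS, hLHS ▸ pExp_posSemidef hμ0 fun ω => ?_⟩
  simpa only [conjTranspose_eq_transpose_of_trivial] using (posSemidef_diagonal_sub_vecMulVec hπ0 hπ1).mul_mul_conjTranspose_same (U ω)

/-- Lemma 3, final identity: for random vectors `Z(0), …, Z(J)` and a
discrete `S`, with probability weights `π`,
`∑_j π_j E[Z(j)Z(j)ᵀ] − (∑_j π_j E[Z(j)])(∑_j π_j E[Z(j)])ᵀ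
  − (∑_j π_j E[Var(Z(j)|S)] + Var(∑_j π_j E[Z(j)|S]))
  = E[U (diag(π) − ππᵀ) Uᵀ]`,
where `U` has columns `E[Z(j)|S]`; in particular it is positive semi-definite. -/
theorem stmt17 (Ω : Type) [Fintype Ω] (μ : Ω → ℝ)
    (hμ0 : ∀ ω, 0 ≤ μ ω) (hμ1 : ∑ ω, μ ω = 1)
    (R q J : ℕ) (S : Ω → Fin R)
    (Z : Fin (J+1) → Ω → Fin q → ℝ)
    (pi : Fin (J+1) → ℝ) (hπ0 : ∀ j, 0 ≤ pi j) (hπ1 : ∑ j, pi j = 1) :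
    let EZZT : Fin (J+1) → Matrix (Fin q) (Fin q) ℝ := fun j =>
      pExp μ (fun ω => Matrix.vecMulVec (Z j ω) (Z j ω))
    let EZ : Fin (J+1) → Fin q → ℝ := fun j => pExp μ (Z j)
    let cE : Fin (J+1) → Ω → Fin q → ℝ := fun j => pCondExp μ S (Z j)
    let condVar : Fin (J+1) → Ω → Matrix (Fin q) (Fin q) ℝ := fun j ω =>
      pCondExp μ S (fun ω' => Matrix.vecMulVec (Z j ω') (Z j ω')) ω
        - Matrix.vecMulVec (cE j ω) (cE j ω)
    let W : Ω → Fin q → ℝ := fun ω => ∑ j, pi j • cE j ω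
    let VarW : Matrix (Fin q) (Fin q) ℝ :=
      pExp μ (fun ω => Matrix.vecMulVec (W ω) (W ω))
        - Matrix.vecMulVec (pExp μ W) (pExp μ W)
    let U : Ω → Matrix (Fin q) (Fin (J+1)) ℝ := fun ω =>
      Matrix.of fun i j => cE j ω i
    let LHS : Matrix (Fin q) (Fin q) ℝ :=
      (∑ j, pi j • EZZT j)
        - Matrix.vecMulVec (∑ j, pi j • EZ j) (∑ j, pi j • EZ j)
        - ((∑ j, pi j • pExp μ (condVar j)) + VarW)
    LHS = pExp μ
        (fun ω => U ω * (Matrix.diagonal pi - Matrix.vecMulVec pi pi) * (U ω)ᵀ) ∧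
    LHS.PosSemidef :=
  stmt17_general Ω μ hμ0 R q J S Z pi hπ0 hπ1
end

section
/- Woodbury-style inversion for the IMMRM Hessian: let W_0, ..., W_J be K×K positive definite matrices, δ_1,...,δ_J the standard basis of ℝ^J, and 1_J the all-ones vector. Define H = Σ_{j=1}^J W_j ⊗ δ_j δ_j^T − (Σ_{j=1}^J W_j ⊗ δ_j)(Σ_{j=0}^J W_j)^{-1}(Σ_{j=1}^J W_j ⊗ δ_j^T) as a JK×JK matrix, assuming Σ_{j=0}^J W_j is invertible. Then H is invertible with H^{-1} = Σ_{j=1}^J W_j^{-1} ⊗ δ_j δ_j^T + W_0^{-1} ⊗ 1_J 1_J^T. -/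
/-!
Let `D` be the block diagonal matrix of `W_1, …, W_J`, `E = I_K ⊗ 1_J` and `S = ∑_{j=0}^J W_j`.
Then `∑ W_j ⊗ δ_j = D E` and `∑ W_j ⊗ δ_jᵀ = Eᵀ D`, so `H = D - D E S⁻¹ Eᵀ D`, while
`Eᵀ D E = S - W_0`. The Woodbury identity therefore gives `H⁻¹ = D⁻¹ + E W_0⁻¹ Eᵀ`,
and `E W_0⁻¹ Eᵀ = W_0⁻¹ ⊗ 1_J 1_Jᵀ`.
-/

open Matrix Kronecker

namespace Matrix

variable {α m n ι : Type*}

theorem woodbury_mul_eq_one [Ring α] [Fintype m] [Fintype n] [DecidableEq m] [DecidableEq n]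
    {D D' : Matrix n n α} {E : Matrix n m α} {F : Matrix m n α} {s s' w w' : Matrix m m α}
    (hD : D * D' = 1) (hs : s' * s = 1) (hw : w * w' = 1) (hFDE : F * D * E + w = s) :
    (D - D * E * s' * (F * D)) * (D' + E * w' * F) = 1 := by
  have hcancel : s' * (F * D * E) * w' = w' - s' := by
    rw [eq_sub_of_add_eq hFDE, Matrix.mul_sub, Matrix.sub_mul, hs, Matrix.one_mul,
      Matrix.mul_assoc s' w, hw, Matrix.mul_one]
  calc (D - D * E * s' * (F * D)) * (D' + E * w' * F)
      = D * D' + D * E * w' * F - D * E * s' * F * (D * D')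
          - D * E * (s' * (F * D * E) * w') * F := by
        simp only [Matrix.sub_mul, Matrix.mul_add, Matrix.mul_assoc]; abel
    _ = 1 := by rw [hD, hcancel]; simp only [Matrix.mul_one, Matrix.mul_sub, Matrix.sub_mul]; abel

variable [CommSemiring α]

theorem sum_kronecker_vecMulVec_single [Fintype ι] [DecidableEq ι] (A : ι → Matrix m n α) :
    ∑ j, A j ⊗ₖ vecMulVec (Pi.single j 1) (Pi.single j 1) = blockDiagonal A := by
  ext ⟨i, j⟩ ⟨k, j'⟩
  rcases eq_or_ne j j' with rfl | hj <;>
    simp [Matrix.sum_apply, vecMulVec_apply, Pi.single_apply, blockDiagonal_apply, *]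

theorem sum_kronecker_replicateCol_single [Fintype ι] [DecidableEq ι] [Fintype n]
    [DecidableEq n] (A : ι → Matrix m n α) :
    ∑ j, A j ⊗ₖ replicateCol Unit (Pi.single j 1)
      = blockDiagonal A * ((1 : Matrix n n α) ⊗ₖ replicateCol Unit (fun _ : ι => 1)) := by
  ext ⟨i, j⟩ ⟨k, u⟩
  simp [Matrix.sum_apply, Pi.single_apply, blockDiagonal_apply, mul_apply, one_apply,
    Fintype.sum_prod_type]

theorem sum_kronecker_replicateRow_single [Fintype ι] [DecidableEq ι] [Fintype m]
    [DecidableEq m] (A : ι → Matrix m n α) :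
    ∑ j, A j ⊗ₖ replicateRow Unit (Pi.single j 1)
      = ((1 : Matrix m m α) ⊗ₖ replicateRow Unit (fun _ : ι => 1)) * blockDiagonal A := by
  ext ⟨i, u⟩ ⟨k, j⟩
  simp [Matrix.sum_apply, Pi.single_apply, blockDiagonal_apply, mul_apply, one_apply,
    Fintype.sum_prod_type]

theorem kronecker_replicateRow_mul_blockDiagonal_mul_kronecker_replicateCol [Fintype ι]
    [DecidableEq ι] [Fintype m] [Fintype n] [DecidableEq m] [DecidableEq n] (A : ι → Matrix m n α) :
    ((1 : Matrix m m α) ⊗ₖ replicateRow Unit (fun _ : ι => 1)) * blockDiagonal A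
        * ((1 : Matrix n n α) ⊗ₖ replicateCol Unit (fun _ : ι => 1))
      = (∑ j, A j) ⊗ₖ (1 : Matrix Unit Unit α) := by
  ext ⟨i, u⟩ ⟨k, u'⟩
  simp [Matrix.sum_apply, blockDiagonal_apply, mul_apply, one_apply, Fintype.sum_prod_type]

theorem kronecker_replicateCol_mul_kronecker_mul_kronecker_replicateRow [Fintype m]
    [DecidableEq m] (B : Matrix m m α) (v : ι → α) :
    ((1 : Matrix m m α) ⊗ₖ replicateCol Unit v) * (B ⊗ₖ (1 : Matrix Unit Unit α))
        * ((1 : Matrix m m α) ⊗ₖ replicateRow Unit v)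
      = B ⊗ₖ vecMulVec v v := by
  rw [← mul_kronecker_mul, ← mul_kronecker_mul, Matrix.one_mul, Matrix.mul_one, Matrix.mul_one,
    vecMulVec_eq Unit]

end Matrix

/-- Woodbury-style inversion for the IMMRM Hessian: for positive
definite `W_0, …, W_J` with `∑_j W_j` invertible, the `JK × JK` matrix
`H = ∑_{j=1}^J W_j ⊗ δ_jδ_jᵀ − (∑_{j=1}^J W_j ⊗ δ_j)(∑_{j=0}^J W_j)⁻¹(∑_{j=1}^J W_j ⊗ δ_jᵀ)`
is invertible with `H⁻¹ = ∑_{j=1}^J W_j⁻¹ ⊗ δ_jδ_jᵀ + W_0⁻¹ ⊗ 1_J1_Jᵀ`. -/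
theorem stmt18 (K J : ℕ) (W : Fin (J+1) → Matrix (Fin K) (Fin K) ℝ)
    (hW : ∀ j, (W j).PosDef) (hsum : IsUnit (∑ j, W j).det) :
    let δ : Fin J → Fin J → ℝ := fun j => Pi.single j 1
    let H : Matrix (Fin K × Fin J) (Fin K × Fin J) ℝ :=
      (∑ j : Fin J, W j.succ ⊗ₖ Matrix.vecMulVec (δ j) (δ j))
        - (∑ j : Fin J, W j.succ ⊗ₖ Matrix.replicateCol Unit (δ j))
          * ((∑ j : Fin (J+1), W j)⁻¹ ⊗ₖ (1 : Matrix Unit Unit ℝ))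
          * (∑ j : Fin J, W j.succ ⊗ₖ Matrix.replicateRow Unit (δ j))
    IsUnit H.det ∧
    H⁻¹ = (∑ j : Fin J, (W j.succ)⁻¹ ⊗ₖ Matrix.vecMulVec (δ j) (δ j))
        + (W 0)⁻¹ ⊗ₖ Matrix.vecMulVec (fun _ => (1 : ℝ)) (fun _ => (1 : ℝ)) := by
  intro δ H
  set D := blockDiagonal (fun j : Fin J => W j.succ)
  set E : Matrix (Fin K × Fin J) (Fin K × Unit) ℝ := 1 ⊗ₖ replicateCol Unit (fun _ => 1)
  set F : Matrix (Fin K × Unit) (Fin K × Fin J) ℝ := 1 ⊗ₖ replicateRow Unit (fun _ => 1)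
  have hWinv (j) : W j * (W j)⁻¹ = 1 := mul_nonsing_inv _ (hW j).det_pos.ne'.isUnit
  have hD : D * blockDiagonal (fun j : Fin J => (W j.succ)⁻¹) = 1 := by
    rw [← blockDiagonal_mul]
    simp only [hWinv]
    exact blockDiagonal_one
  have hs : ((∑ j, W j)⁻¹ ⊗ₖ (1 : Matrix Unit Unit ℝ)) * ((∑ j, W j) ⊗ₖ 1) = 1 := by
    rw [← mul_kronecker_mul, nonsing_inv_mul _ hsum, Matrix.one_mul, one_kronecker_one]
  have hw : (W 0 ⊗ₖ (1 : Matrix Unit Unit ℝ)) * ((W 0)⁻¹ ⊗ₖ 1) = 1 := by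
    rw [← mul_kronecker_mul, hWinv, Matrix.one_mul, one_kronecker_one]
  have hFDE : F * D * E + W 0 ⊗ₖ 1 = (∑ j, W j) ⊗ₖ 1 := by
    rw [kronecker_replicateRow_mul_blockDiagonal_mul_kronecker_replicateCol, ← add_kronecker,
      Fin.sum_univ_succ, add_comm]
  have hright_inv : H * ((∑ j : Fin J, (W j.succ)⁻¹ ⊗ₖ vecMulVec (δ j) (δ j))
      + (W 0)⁻¹ ⊗ₖ vecMulVec (fun _ => (1 : ℝ)) (fun _ => (1 : ℝ))) = 1 := by
    simp only [H, δ, sum_kronecker_vecMulVec_single, sum_kronecker_replicateCol_single,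
      sum_kronecker_replicateRow_single]
    rw [← kronecker_replicateCol_mul_kronecker_mul_kronecker_replicateRow]
    exact woodbury_mul_eq_one hD hs hw hFDE
  exact ⟨isUnit_det_of_right_inverse hright_inv, inv_eq_right_inv hright_inv⟩
end
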